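/- Let R be a commutative Noetherian ring, N ⊆ M and N′ ⊆ M′ submodules of finitely generated R-modules, and p a prime ideal. If N ⊂^{p} K is a regular p-prime extension in M and N′ ⊂^{p} K′ is a regular p-prime extension in M′, then N ⊕ N′ ⊂^{p} K ⊕ K′ is a regular p-prime extension in M ⊕ M′. -/

import Mathlib

variable {R : Type*} [CommRing R] {M : Type*} [AddCommGroup M] [Module R M]

/-- The colon submodule `(N :_M I) = {x ∈ M | I • x ⊆ N}`. -/
def colonSubmodule (N : Submodule R M) (I : Ideal R) : Submodule R M where
  carrier := {x | ∀ a ∈ I, a • x ∈ N}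
  add_mem' := fun hx hy a ha => by simpa [smul_add] using N.add_mem (hx a ha) (hy a ha)
  zero_mem' := fun a _ => by simp
  smul_mem' := fun c x hx a ha => by
    rw [smul_comm]
    exact N.smul_mem c (hx a ha)

/-- `K` is a `p`-prime extension of `N`, i.e. `N` is a `p`-prime submodule of `K`. -/
def IsPrimeExt (p : Ideal R) (N K : Submodule R M) : Prop :=
  N < K ∧ N.colon K = p ∧ ∀ a : R, ∀ x ∈ K, a • x ∈ N → x ∈ N ∨ a ∈ p

/-- The associated primes of `T / N` for submodules `N ≤ T ≤ M`. -/
def assOf (R : Type*) {M : Type*} [CommRing R] [AddCommGroup M] [Module R M]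
    (N T : Submodule R M) : Set (Ideal R) :=
  associatedPrimes R ↥(T.map N.mkQ)

/-- `K` is a maximal `p`-prime extension of `N` inside `T`. -/
def IsMaximalPrimeExtIn (T : Submodule R M) (p : Ideal R) (N K : Submodule R M) : Prop :=
  K ≤ T ∧ IsPrimeExt p N K ∧ ∀ L ≤ T, IsPrimeExt p N L → ¬ K < L

/-- `K` is a regular `p`-prime extension of `N` inside `T`: a maximal `p`-prime
extension where `p` is a maximal element of `Ass (T/N)`. -/
def IsRegularPrimeExtIn (T : Submodule R M) (p : Ideal R) (N K : Submodule R M) : Prop :=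
  IsMaximalPrimeExtIn T p N K ∧ Maximal (· ∈ assOf R N T) p

/-- A regular prime extension (RPE) filtration inside `T` with primes `p i`. -/
def IsRPEFiltrationIn (T : Submodule R M) {n : ℕ}
    (F : Fin (n + 1) → Submodule R M) (p : Fin n → Ideal R) : Prop :=
  ∀ i : Fin n, IsRegularPrimeExtIn T (p i) (F i.castSucc) (F i.succ)

/-- The generalized prime ideal factorization of `N` in `T` is given by the multiset `s`:
there is an RPE filtration of `T` over `N` whose multiset of primes is `s`. -/
def HasGPIF (N T : Submodule R M) (s : Multiset (Ideal R)) : Prop :=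
  ∃ (n : ℕ) (F : Fin (n + 1) → Submodule R M) (p : Fin n → Ideal R),
    F 0 = N ∧ F (Fin.last n) = T ∧ IsRPEFiltrationIn T F p ∧ (List.ofFn p : Multiset (Ideal R)) = s

/-! Over a Noetherian ring, a regular `p`-prime extension of `N` in `M` can only be the colon
submodule `(N :_M p)`: this submodule contains every `p`-prime extension of `N`, and it is itself one
because an element killed by `p` modulo `N` has annihilator `p` (or lies in `N`) as soon as `p` is
maximal in `Ass (M/N)`. Both `(N :_M p)` and the associated primes of `M/N` commute with direct
sums, and a prime maximal in two sets is maximal in their union. -/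

section

variable {M' : Type*} [AddCommGroup M'] [Module R M']

lemma mem_colonSubmodule {N : Submodule R M} {I : Ideal R} {x : M} :
    x ∈ colonSubmodule N I ↔ ∀ a ∈ I, a • x ∈ N :=
  Iff.rfl

lemma colonSubmodule_prod (N : Submodule R M) (N' : Submodule R M') (I : Ideal R) :
    colonSubmodule (N.prod N') I = (colonSubmodule N I).prod (colonSubmodule N' I) := by
  ext ⟨x, x'⟩
  simp only [Submodule.mem_prod, mem_colonSubmodule, Prod.smul_mk, forall_and]

lemma assOf_top (N : Submodule R M) : assOf R N ⊤ = associatedPrimes R (M ⧸ N) := by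
  rw [assOf, Submodule.map_top, Submodule.range_mkQ]
  exact LinearEquiv.AssociatedPrimes.eq Submodule.topEquiv

lemma associatedPrimes_quotient_prod (N : Submodule R M) (N' : Submodule R M') :
    associatedPrimes R ((M × M') ⧸ N.prod N') =
      associatedPrimes R (M ⧸ N) ∪ associatedPrimes R (M' ⧸ N') := by
  have hker : LinearMap.ker (N.mkQ.prodMap N'.mkQ) = N.prod N' := by
    rw [LinearMap.ker_prodMap, Submodule.ker_mkQ, Submodule.ker_mkQ]
  have hsurj : Function.Surjective (N.mkQ.prodMap N'.mkQ) :=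
    Prod.map_surjective.mpr ⟨N.mkQ_surjective, N'.mkQ_surjective⟩
  rw [← associatedPrimes.prod]
  exact LinearEquiv.AssociatedPrimes.eq
    ((Submodule.quotEquivOfEq _ _ hker.symm).trans (LinearMap.quotKerEquivOfSurjective _ hsurj))

lemma Maximal.union {α : Type*} [Preorder α] {s t : Set α} {a : α}
    (hs : Maximal (· ∈ s) a) (ht : Maximal (· ∈ t) a) : Maximal (· ∈ s ∪ t) a :=
  ⟨Or.inl hs.1, fun _ hb hab => hb.elim (hs.2 · hab) (ht.2 · hab)⟩

lemma eq_zero_or_mem_of_maximal_associatedPrime [IsNoetherianRing R] {p : Ideal R}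
    (hp : Maximal (· ∈ associatedPrimes R M) p) {y : M} (hpy : ∀ a ∈ p, a • y = 0) {a : R}
    (hay : a • y = 0) : y = 0 ∨ a ∈ p := by
  refine or_iff_not_imp_left.mpr fun hy => ?_
  obtain ⟨q, hq, hyq⟩ := exists_le_isAssociatedPrime_of_isNoetherianRing R y hy
  have hpq : p ≤ q := fun b hb => hyq (Submodule.mem_colon_singleton.mpr (hpy b hb))
  exact hp.2 hq hpq (hyq (Submodule.mem_colon_singleton.mpr hay))

lemma IsPrimeExt.le_colonSubmodule {p : Ideal R} {N K : Submodule R M} (h : IsPrimeExt p N K) :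
    K ≤ colonSubmodule N p := fun x hx a ha =>
  Submodule.mem_colon.mp (h.2.1 ▸ ha : a ∈ N.colon K) x hx

lemma isPrimeExt_colonSubmodule [IsNoetherianRing R] {p : Ideal R} {N : Submodule R M}
    (hp : Maximal (· ∈ associatedPrimes R (M ⧸ N)) p) : IsPrimeExt p N (colonSubmodule N p) := by
  have hmk : ∀ (a : R) (x : M), a • (Submodule.Quotient.mk x : M ⧸ N) = 0 ↔ a • x ∈ N :=
    fun a x => by rw [← Submodule.Quotient.mk_smul, Submodule.Quotient.mk_eq_zero]
  have hprime : ∀ a, ∀ x ∈ colonSubmodule N p, a • x ∈ N → x ∈ N ∨ a ∈ p := fun a x hx hax => by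
    simpa only [Submodule.Quotient.mk_eq_zero] using eq_zero_or_mem_of_maximal_associatedPrime hp
      (fun b hb => (hmk b x).mpr (hx b hb)) ((hmk a x).mpr hax)
  obtain ⟨hp_prime, z, hpz⟩ := isAssociatedPrime_iff.mp hp.1
  obtain ⟨x, rfl⟩ := Submodule.Quotient.mk_surjective N z
  have hann : ∀ a, a ∈ p ↔ a • x ∈ N := fun a => by
    rw [hpz, Submodule.mem_colon_singleton, Submodule.mem_bot, hmk]
  have hxN : x ∉ N := fun hx => hp_prime.ne_top ((Ideal.eq_top_iff_one p).mpr
    ((hann 1).mpr (by rwa [one_smul])))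
  have hxp : x ∈ colonSubmodule N p := fun a ha => (hann a).mp ha
  refine ⟨SetLike.lt_iff_le_and_exists.mpr ⟨fun y hy a _ => N.smul_mem a hy, x, hxp, hxN⟩,
    le_antisymm (fun a ha => ?_) (fun a ha => Submodule.mem_colon.mpr fun y hy => hy a ha), hprime⟩
  exact (hprime a x hxp (Submodule.mem_colon.mp ha x hxp)).resolve_left hxN

lemma isRegularPrimeExtIn_top_iff [IsNoetherianRing R] {p : Ideal R} {N K : Submodule R M} :
    IsRegularPrimeExtIn ⊤ p N K ↔
      Maximal (· ∈ associatedPrimes R (M ⧸ N)) p ∧ K = colonSubmodule N p := by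
  rw [IsRegularPrimeExtIn, IsMaximalPrimeExtIn, assOf_top]
  constructor
  · rintro ⟨⟨-, hK, hmax⟩, hp⟩
    refine ⟨hp, hK.le_colonSubmodule.eq_of_not_lt fun hlt => ?_⟩
    exact hmax _ le_top (isPrimeExt_colonSubmodule hp) hlt
  · rintro ⟨hp, rfl⟩
    exact ⟨⟨le_top, isPrimeExt_colonSubmodule hp,
      fun L _ hL => hL.le_colonSubmodule.not_gt⟩, hp⟩

end

theorem regular_prime_ext_prod_general {R : Type*} [CommRing R] [IsNoetherianRing R]
    {M : Type*} [AddCommGroup M] [Module R M]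
    {M' : Type*} [AddCommGroup M'] [Module R M']
    (p : Ideal R)
    (N K : Submodule R M) (N' K' : Submodule R M')
    (h : IsRegularPrimeExtIn ⊤ p N K) (h' : IsRegularPrimeExtIn ⊤ p N' K') :
    IsRegularPrimeExtIn ⊤ p (N.prod N') (K.prod K') := by
  rw [isRegularPrimeExtIn_top_iff] at h h' ⊢
  obtain ⟨hp, rfl⟩ := h
  obtain ⟨hp', rfl⟩ := h'
  rw [associatedPrimes_quotient_prod, colonSubmodule_prod]
  exact ⟨hp.union hp', rfl⟩

/-- If `N ⊂^p K` and `N' ⊂^p K'` are regular `p`-prime extensions in `M` and `M'`,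
then `N ⊕ N' ⊂^p K ⊕ K'` is a regular `p`-prime extension in `M ⊕ M'`. -/
theorem regular_prime_ext_prod {R : Type*} [CommRing R] [IsNoetherianRing R]
    {M : Type*} [AddCommGroup M] [Module R M] [Module.Finite R M]
    {M' : Type*} [AddCommGroup M'] [Module R M'] [Module.Finite R M']
    (p : Ideal R) (hp : p.IsPrime)
    (N K : Submodule R M) (N' K' : Submodule R M')
    (h : IsRegularPrimeExtIn ⊤ p N K) (h' : IsRegularPrimeExtIn ⊤ p N' K') :
    IsRegularPrimeExtIn ⊤ p (N.prod N') (K.prod K') :=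
  regular_prime_ext_prod_general p N K N' K' h h'
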